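/- arXiv:2312.15638 — 2 statements merged into one kernel-verified Lean document; each statement's English description precedes it below -/
import Mathlib

section
/- Minimax interchange for the worst-case CVaR (stochastic saddle point): if Σ ∈ 𝕊^n is positive definite and L : ℝ^n → ℝ is a continuous loss function such that (L(ξ)−β)⁺ is integrable under every ℙ ∈ 𝒫(μ,Σ) for every β ∈ ℝ, then sup_{ℙ∈𝒫(μ,Σ)} inf_{β∈ℝ} { β + (1/ε)·E_ℙ[(L(ξ)−β)⁺] } = inf_{β∈ℝ} { β + (1/ε)·sup_{ℙ∈𝒫(μ,Σ)} E_ℙ[(L(ξ)−β)⁺] }. -/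
open MeasureTheory Matrix
open scoped ENNReal

/-- Conditional value-at-risk at level `ε` of loss `L` under measure `ℙ`. -/
noncomputable def CVaR {ι : Type*} [Fintype ι] (ε : ℝ)
    (ℙ : Measure (ι → ℝ)) (L : (ι → ℝ) → ℝ) : ℝ :=
  ⨅ β : ℝ, (β + (1 / ε) * ∫ ξ, max (L ξ - β) 0 ∂ℙ)

/-- The set `𝒫(μ, S)` of probability measures on `ι → ℝ` with finite second
moments, mean `μ` and covariance `S`. -/
def MomentSet {ι : Type*} [Fintype ι] (μ : ι → ℝ) (S : Matrix ι ι ℝ) :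
    Set (Measure (ι → ℝ)) :=
  {ℙ | IsProbabilityMeasure ℙ ∧
    (∀ i, Integrable (fun ξ => ξ i) ℙ) ∧
    (∀ i j, Integrable (fun ξ => ξ i * ξ j) ℙ) ∧
    (∀ i, ∫ ξ, ξ i ∂ℙ = μ i) ∧
    (∀ i j, ∫ ξ, (ξ i - μ i) * (ξ j - μ j) ∂ℙ = S i j)}

/-- Worst-case CVaR over `𝒫(μ, S)`. -/
noncomputable def wcCVaR {ι : Type*} [Fintype ι] (ε : ℝ) (μ : ι → ℝ)
    (S : Matrix ι ι ℝ) (L : (ι → ℝ) → ℝ) : ℝ :=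
  sSup ((fun ℙ => CVaR ε ℙ L) '' MomentSet μ S)

namespace WcProof

variable {n : ℕ}

/-- Mixture of two measures with weight `t`. -/
noncomputable def mixT (t : ℝ) (P Q : Measure (Fin n → ℝ)) : Measure (Fin n → ℝ) :=
  ENNReal.ofReal t • P + ENNReal.ofReal (1 - t) • Q

lemma integrable_mixT {t : ℝ} {P Q : Measure (Fin n → ℝ)} {f : (Fin n → ℝ) → ℝ}
    (hP : Integrable f P) (hQ : Integrable f Q) : Integrable f (mixT t P Q) :=
  (hP.smul_measure ENNReal.ofReal_ne_top).add_measure (hQ.smul_measure ENNReal.ofReal_ne_top)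

lemma integral_mixT {t : ℝ} (ht0 : 0 ≤ t) (ht1 : t ≤ 1) {P Q : Measure (Fin n → ℝ)}
    {f : (Fin n → ℝ) → ℝ} (hP : Integrable f P) (hQ : Integrable f Q) :
    ∫ x, f x ∂(mixT t P Q) = t * ∫ x, f x ∂P + (1 - t) * ∫ x, f x ∂Q := by
  rw [mixT, integral_add_measure (hP.smul_measure ENNReal.ofReal_ne_top)
      (hQ.smul_measure ENNReal.ofReal_ne_top),
    integral_smul_measure, integral_smul_measure, ENNReal.toReal_ofReal ht0,
    ENNReal.toReal_ofReal (by linarith)]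
  simp [smul_eq_mul]

lemma integrable_cov {μ : Fin n → ℝ} {S : Matrix (Fin n) (Fin n) ℝ}
    {Q : Measure (Fin n → ℝ)} (hQ : Q ∈ MomentSet μ S) (i j : Fin n) :
    Integrable (fun ξ => (ξ i - μ i) * (ξ j - μ j)) Q := by
  obtain ⟨h1, h2, h3, h4, h5⟩ := hQ
  have he : (fun ξ : Fin n → ℝ => (ξ i - μ i) * (ξ j - μ j))
      = fun ξ => ξ i * ξ j - μ j * ξ i - μ i * ξ j + μ i * μ j := by funext ξ; ring
  rw [he]
  exact (((h3 i j).sub ((h2 i).const_mul (μ j))).sub ((h2 j).const_mul (μ i))).add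
    (integrable_const _)

lemma mixT_mem {μ : Fin n → ℝ} {S : Matrix (Fin n) (Fin n) ℝ} {P Q : Measure (Fin n → ℝ)}
    (hP : P ∈ MomentSet μ S) (hQ : Q ∈ MomentSet μ S)
    {t : ℝ} (ht0 : 0 ≤ t) (ht1 : t ≤ 1) : mixT t P Q ∈ MomentSet μ S := by
  have hPc := integrable_cov hP
  have hQc := integrable_cov hQ
  obtain ⟨hP1, hP2, hP3, hP4, hP5⟩ := hP
  obtain ⟨hQ1, hQ2, hQ3, hQ4, hQ5⟩ := hQ
  refine ⟨?_, fun i => integrable_mixT (hP2 i) (hQ2 i),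
    fun i j => integrable_mixT (hP3 i j) (hQ3 i j), ?_, ?_⟩
  · constructor
    have : (mixT t P Q) Set.univ
        = ENNReal.ofReal t * P Set.univ + ENNReal.ofReal (1 - t) * Q Set.univ := by
      simp [mixT, Measure.add_apply, Measure.smul_apply, smul_eq_mul]
    rw [this, measure_univ, measure_univ, mul_one, mul_one,
      ← ENNReal.ofReal_add ht0 (by linarith), show t + (1 - t) = 1 by ring, ENNReal.ofReal_one]
  · intro i
    rw [integral_mixT ht0 ht1 (hP2 i) (hQ2 i), hP4 i, hQ4 i]; ring
  · intro i j
    rw [integral_mixT ht0 ht1 (hPc i j) (hQc i j), hP5 i j, hQ5 i j]; ring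

open scoped MatrixOrder in
lemma momentSet_nonempty {μ : Fin n → ℝ} {S : Matrix (Fin n) (Fin n) ℝ}
    (hS : S.PosSemidef) : (MomentSet μ S).Nonempty := by
  classical
  set A := CFC.sqrt S with hA
  have hAsym : ∀ i j, A j i = A i j := by
    intro i j
    have h : Aᴴ = A := (CFC.sqrt_nonneg S).posSemidef.1
    conv_rhs => rw [← h]
    simp [Matrix.conjTranspose_apply]
  have hn1 : (0:ℝ) < (n:ℝ) + 1 := by positivity
  set c : ℝ := Real.sqrt ((n:ℝ) + 1) with hc
  have hc2 : c * c = (n:ℝ) + 1 := Real.mul_self_sqrt (by positivity)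
  set a : Fin n → (Fin n → ℝ) := fun i => fun j => A j i with ha
  set Qm : Measure (Fin n → ℝ) :=
    ENNReal.ofReal (1 / (2 * ((n:ℝ) + 1))) •
      (∑ i : Fin n, (Measure.dirac (μ + c • a i) + Measure.dirac (μ - c • a i)))
    + ENNReal.ofReal (1 / ((n:ℝ) + 1)) • Measure.dirac μ with hQm
  have hdint : ∀ (f : (Fin n → ℝ) → ℝ), Continuous f → ∀ x, Integrable f (Measure.dirac x) := by
    intro f hf x
    refine ⟨hf.aestronglyMeasurable, ?_⟩
    simp [HasFiniteIntegral, lintegral_dirac]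
  have hint : ∀ (f : (Fin n → ℝ) → ℝ), Continuous f → Integrable f Qm := by
    intro f hf
    refine Integrable.add_measure (Integrable.smul_measure ?_ ENNReal.ofReal_ne_top)
      (Integrable.smul_measure (hdint f hf μ) ENNReal.ofReal_ne_top)
    rw [integrable_finset_sum_measure]
    intro i _
    exact (hdint f hf _).add_measure (hdint f hf _)
  have hcalc : ∀ (f : (Fin n → ℝ) → ℝ), Continuous f →
      ∫ x, f x ∂Qm = (1 / (2 * ((n:ℝ) + 1))) *
        (∑ i : Fin n, (f (μ + c • a i) + f (μ - c • a i))) + (1 / ((n:ℝ) + 1)) * f μ := by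
    intro f hf
    rw [hQm, integral_add_measure (Integrable.smul_measure (by
        rw [integrable_finset_sum_measure]; exact fun i _ => (hdint f hf _).add_measure (hdint f hf _))
        ENNReal.ofReal_ne_top)
      (Integrable.smul_measure (hdint f hf μ) ENNReal.ofReal_ne_top),
      integral_smul_measure, integral_smul_measure,
      integral_finset_sum_measure (fun i _ => (hdint f hf _).add_measure (hdint f hf _))]
    have : ∀ i : Fin n, ∫ x, f x ∂(Measure.dirac (μ + c • a i) + Measure.dirac (μ - c • a i))
        = f (μ + c • a i) + f (μ - c • a i) := by
      intro i
      rw [integral_add_measure (hdint f hf _) (hdint f hf _), integral_dirac, integral_dirac]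
    simp_rw [this, integral_dirac]
    rw [ENNReal.toReal_ofReal (by positivity), ENNReal.toReal_ofReal (by positivity)]
    simp [smul_eq_mul]
  refine ⟨Qm, ?_, fun i => hint _ (continuous_apply i),
    fun i j => hint _ ((continuous_apply i).mul (continuous_apply j)), ?_, ?_⟩
  · constructor
    have h1 : Qm Set.univ = ENNReal.ofReal (1 / (2 * ((n:ℝ) + 1))) * (↑n * 2)
        + ENNReal.ofReal (1 / ((n:ℝ) + 1)) * 1 := by
      simp [hQm, Measure.add_apply, Measure.smul_apply, smul_eq_mul,
        Measure.finset_sum_apply, measure_univ, Finset.sum_const, Finset.card_univ,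
        mul_comm, two_mul]
      ring
    rw [h1]
    rw [show ((n:ℝ≥0∞) * 2) = ENNReal.ofReal ((n:ℝ) * 2) by
        rw [ENNReal.ofReal_mul (by positivity)]; simp,
      mul_one, ← ENNReal.ofReal_mul (by positivity), ← ENNReal.ofReal_add (by positivity)
        (by positivity), show 1 / (2 * ((n:ℝ) + 1)) * ((n:ℝ) * 2) + 1 / ((n:ℝ) + 1) = 1 by
        field_simp, ENNReal.ofReal_one]
  · intro i
    rw [hcalc _ (continuous_apply i)]
    have : ∀ k : Fin n, (μ + c • a k) i + (μ - c • a k) i = 2 * μ i := by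
      intro k; simp [Pi.add_apply, Pi.sub_apply, Pi.smul_apply, smul_eq_mul]; ring
    simp_rw [this]
    rw [Finset.sum_const, Finset.card_univ, Fintype.card_fin]
    field_simp
    try ring
  · intro i j
    rw [hcalc _ (by continuity)]
    have : ∀ k : Fin n, ((μ + c • a k) i - μ i) * ((μ + c • a k) j - μ j)
        + ((μ - c • a k) i - μ i) * ((μ - c • a k) j - μ j)
        = 2 * (c * c) * (A i k * A j k) := by
      intro k; simp [Pi.add_apply, Pi.sub_apply, Pi.smul_apply, smul_eq_mul, ha]; ring
    simp_rw [this, hc2]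
    rw [← Finset.mul_sum]
    have hSij : S i j = ∑ k : Fin n, A i k * A j k := by
      conv_lhs => rw [← CFC.sqrt_mul_sqrt_self S hS.nonneg]
      rw [Matrix.mul_apply]
      exact Finset.sum_congr rfl fun k _ => by rw [hAsym k j]
    rw [hSij]
    field_simp
    try ring


lemma E_nonneg {L : (Fin n → ℝ) → ℝ} {Q : Measure (Fin n → ℝ)} (β : ℝ) :
    0 ≤ ∫ ξ, max (L ξ - β) 0 ∂Q :=
  integral_nonneg fun ξ => le_max_right _ _

lemma E_lip {L : (Fin n → ℝ) → ℝ} {Q : Measure (Fin n → ℝ)} [IsProbabilityMeasure Q] {β β' : ℝ}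
    (h1 : Integrable (fun ξ => max (L ξ - β) 0) Q)
    (h2 : Integrable (fun ξ => max (L ξ - β') 0) Q) :
    |(∫ ξ, max (L ξ - β) 0 ∂Q) - ∫ ξ, max (L ξ - β') 0 ∂Q| ≤ |β - β'| := by
  rw [← integral_sub h1 h2]
  calc |∫ ξ, (max (L ξ - β) 0 - max (L ξ - β') 0) ∂Q|
      ≤ ∫ ξ, |max (L ξ - β) 0 - max (L ξ - β') 0| ∂Q := by
        simpa [Real.norm_eq_abs] using
          norm_integral_le_integral_norm (fun ξ => max (L ξ - β) 0 - max (L ξ - β') 0) (μ := Q)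
    _ ≤ ∫ _ξ, |β - β'| ∂Q := by
        refine integral_mono (h1.sub h2).abs (integrable_const _) fun ξ => ?_
        calc |max (L ξ - β) 0 - max (L ξ - β') 0| ≤ |(L ξ - β) - (L ξ - β')| :=
              abs_max_sub_max_le_abs _ _ _
          _ = |β - β'| := by rw [show (L ξ - β) - (L ξ - β') = β' - β by ring, abs_sub_comm]
    _ = |β - β'| := by simp

lemma E_convex {L : (Fin n → ℝ) → ℝ} {Q : Measure (Fin n → ℝ)} {a b s : ℝ}
    (hs0 : 0 ≤ s) (hs1 : s ≤ 1)
    (ha : Integrable (fun ξ => max (L ξ - a) 0) Q)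
    (hb : Integrable (fun ξ => max (L ξ - b) 0) Q)
    (hab : Integrable (fun ξ => max (L ξ - (s * a + (1 - s) * b)) 0) Q) :
    ∫ ξ, max (L ξ - (s * a + (1 - s) * b)) 0 ∂Q
      ≤ s * ∫ ξ, max (L ξ - a) 0 ∂Q + (1 - s) * ∫ ξ, max (L ξ - b) 0 ∂Q := by
  have key : ∫ ξ, max (L ξ - (s * a + (1 - s) * b)) 0 ∂Q
      ≤ ∫ ξ, (s * max (L ξ - a) 0 + (1 - s) * max (L ξ - b) 0) ∂Q := by
    refine integral_mono hab ((ha.const_mul s).add (hb.const_mul (1 - s))) fun ξ => ?_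
    refine max_le ?_ ?_
    · have h1 : L ξ - (s * a + (1 - s) * b) = s * (L ξ - a) + (1 - s) * (L ξ - b) := by ring
      rw [h1]
      exact add_le_add (mul_le_mul_of_nonneg_left (le_max_left _ _) hs0)
        (mul_le_mul_of_nonneg_left (le_max_left _ _) (by linarith))
    · exact add_nonneg (mul_nonneg hs0 (le_max_right _ _))
        (mul_nonneg (by linarith) (le_max_right _ _))
  rwa [integral_add (ha.const_mul s) (hb.const_mul (1 - s)), integral_const_mul,
    integral_const_mul] at key

lemma convex_between {f : ℝ → ℝ}
    (hf : ∀ a b s : ℝ, 0 ≤ s → s ≤ 1 → f (s * a + (1 - s) * b) ≤ s * f a + (1 - s) * f b)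
    {a b x v : ℝ} (hax : a ≤ x) (hxb : x ≤ b) (ha : f a ≤ v) (hb : f b ≤ v) : f x ≤ v := by
  rcases eq_or_lt_of_le (hax.trans hxb) with h | h
  · have hxa : x = a := le_antisymm (h ▸ hxb) hax
    rwa [hxa]
  · have hba : 0 < b - a := by linarith
    obtain ⟨s, hs0, hs1, hx⟩ : ∃ s, 0 ≤ s ∧ s ≤ 1 ∧ s * a + (1 - s) * b = x := by
      refine ⟨(b - x) / (b - a), div_nonneg (by linarith) hba.le,
        (div_le_one hba).mpr (by linarith), ?_⟩
      field_simp
      ring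
    calc f x = f (s * a + (1 - s) * b) := by rw [hx]
      _ ≤ s * f a + (1 - s) * f b := hf a b s hs0 hs1
      _ ≤ s * v + (1 - s) * v := add_le_add (mul_le_mul_of_nonneg_left ha hs0)
            (mul_le_mul_of_nonneg_left hb (by linarith))
      _ = v := by ring

lemma unif_coercive {ε : ℝ} (hε : ε ∈ Set.Ioo (0:ℝ) 1) {L : (Fin n → ℝ) → ℝ}
    (hL : Continuous L) (μ : Fin n → ℝ) (S : Matrix (Fin n) (Fin n) ℝ) :
    ∃ m : ℝ, m ≤ 0 ∧ ∀ Q ∈ MomentSet μ S, ∀ β ≤ m,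
      Integrable (fun ξ => max (L ξ - β) 0) Q →
      ((1 + ε) / 2) * (m - β) ≤ ∫ ξ, max (L ξ - β) 0 ∂Q := by
  have hε1 : (0:ℝ) < 1 - ε := by linarith [hε.2]
  set trS : ℝ := ∑ i, S i i with htrS
  set X : ℝ := 2 * trS / (1 - ε) with hX
  set t : ℝ := Real.sqrt (max X 0) + 1 with ht
  have ht0 : 0 < t := by positivity
  have ht2 : X ≤ t ^ 2 := by
    nlinarith [Real.sqrt_nonneg (max X 0), Real.sq_sqrt (le_max_right X 0), le_max_left X 0]
  clear_value trS X t
  set K : Set (Fin n → ℝ) := {ξ | ∑ i, (ξ i - μ i) * (ξ i - μ i) ≤ t ^ 2} with hK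
  have hgcont : Continuous (fun ξ : Fin n → ℝ => ∑ i, (ξ i - μ i) * (ξ i - μ i)) := by
    refine continuous_finset_sum _ fun i _ => ?_
    exact ((continuous_apply i).sub continuous_const).mul ((continuous_apply i).sub continuous_const)
  have hKclosed : IsClosed K := isClosed_le hgcont continuous_const
  have hKsub : K ⊆ Metric.closedBall μ t := by
    intro ξ hξ
    rw [Metric.mem_closedBall, dist_pi_le_iff ht0.le]
    intro i
    rw [Real.dist_eq]
    have h1 : (ξ i - μ i) * (ξ i - μ i) ≤ t ^ 2 := by
      refine le_trans ?_ hξ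
      exact Finset.single_le_sum (f := fun i => (ξ i - μ i) * (ξ i - μ i))
        (fun i _ => mul_self_nonneg _) (Finset.mem_univ i)
    nlinarith [abs_mul_abs_self (ξ i - μ i), abs_nonneg (ξ i - μ i)]
  have hKcomp : IsCompact K := (isCompact_closedBall μ t).of_isClosed_subset hKclosed hKsub
  have hKne : K.Nonempty := ⟨μ, by
    simp only [hK, Set.mem_setOf_eq, sub_self, zero_mul, Finset.sum_const_zero]
    positivity⟩
  obtain ⟨x₀, hx₀, hmin⟩ := hKcomp.exists_isMinOn hKne hL.continuousOn
  refine ⟨min (L x₀) 0, min_le_right _ _, ?_⟩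
  intro Q hQ β hβ hQint
  haveI hq1 : IsProbabilityMeasure Q := hQ.1
  have hcov := integrable_cov hQ
  have hq5 := hQ.2.2.2.2
  have hKmeas : MeasurableSet K := hKclosed.measurableSet
  have hgint : Integrable (fun ξ => ∑ i, (ξ i - μ i) * (ξ i - μ i)) Q :=
    integrable_finset_sum _ fun i _ => hcov i i
  have hgval : ∫ ξ, ∑ i, (ξ i - μ i) * (ξ i - μ i) ∂Q = trS := by
    rw [integral_finset_sum _ fun i _ => hcov i i, htrS]
    exact Finset.sum_congr rfl fun i _ => hq5 i i
  have hcheb : (Q Kᶜ).toReal * t ^ 2 ≤ trS := by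
    have hpt : ∀ ξ, Kᶜ.indicator (fun _ => t ^ 2) ξ ≤ ∑ i, (ξ i - μ i) * (ξ i - μ i) := by
      intro ξ
      by_cases hξ : ξ ∈ Kᶜ
      · rw [Set.indicator_of_mem hξ]
        exact le_of_lt (not_le.mp hξ)
      · rw [Set.indicator_of_notMem hξ]
        exact Finset.sum_nonneg fun i _ => mul_self_nonneg _
    have hmono := integral_mono ((integrable_const (t ^ 2)).indicator hKmeas.compl) hgint hpt
    rwa [integral_indicator_const _ hKmeas.compl, smul_eq_mul, hgval] at hmono
  have hKc_half : (Q Kᶜ).toReal ≤ (1 - ε) / 2 := by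
    have h2 : (Q Kᶜ).toReal ≤ trS / t ^ 2 := (le_div_iff₀ (by positivity)).mpr hcheb
    refine h2.trans ?_
    rw [div_le_iff₀ (by positivity)]
    have h3 : 2 * trS ≤ t ^ 2 * (1 - ε) := by
      have := ht2
      rwa [hX, div_le_iff₀ hε1] at this
    nlinarith [h3]
  have hK_half : (1 + ε) / 2 ≤ (Q K).toReal := by
    have hsum : (Q K).toReal + (Q Kᶜ).toReal = 1 := by
      rw [← ENNReal.toReal_add (measure_ne_top Q K) (measure_ne_top Q Kᶜ),
        measure_add_measure_compl hKmeas]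
      simp
    linarith
  set m : ℝ := min (L x₀) 0 with hm
  have hpt2 : ∀ ξ, K.indicator (fun _ => m - β) ξ ≤ max (L ξ - β) 0 := by
    intro ξ
    by_cases hξ : ξ ∈ K
    · rw [Set.indicator_of_mem hξ]
      refine le_max_of_le_left ?_
      have hLξ : L x₀ ≤ L ξ := (isMinOn_iff.mp hmin) ξ hξ
      have : m ≤ L ξ := le_trans (min_le_left _ _) hLξ
      linarith
    · rw [Set.indicator_of_notMem hξ]
      exact le_max_right _ _
  have hmono2 := integral_mono ((integrable_const (m - β)).indicator hKmeas) hQint hpt2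
  rw [integral_indicator_const _ hKmeas, smul_eq_mul] at hmono2
  calc ((1 + ε) / 2) * (m - β) ≤ (Q K).toReal * (m - β) :=
        mul_le_mul_of_nonneg_right hK_half (by linarith)
    _ ≤ _ := hmono2


/-- The integral `E_Q[(L - β)⁺]`. -/
noncomputable def Ei (L : (Fin n → ℝ) → ℝ) (Q : Measure (Fin n → ℝ)) (β : ℝ) : ℝ :=
  ∫ ξ, max (L ξ - β) 0 ∂Q

/-- The CVaR objective `β + (1/ε) E_Q[(L - β)⁺]`. -/
noncomputable def Fi (ε : ℝ) (L : (Fin n → ℝ) → ℝ) (Q : Measure (Fin n → ℝ)) (β : ℝ) : ℝ :=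
  β + (1 / ε) * Ei L Q β

lemma Ei_nonneg {L : (Fin n → ℝ) → ℝ} {Q : Measure (Fin n → ℝ)} (β : ℝ) : 0 ≤ Ei L Q β :=
  E_nonneg β

lemma Fi_ge {ε : ℝ} (hε0 : 0 < ε) {L : (Fin n → ℝ) → ℝ} {Q : Measure (Fin n → ℝ)} (β : ℝ) :
    β ≤ Fi ε L Q β := by
  have h1 : (0:ℝ) ≤ 1 / ε := by positivity
  have := mul_nonneg h1 (Ei_nonneg (L := L) (Q := Q) β)
  unfold Fi
  linarith

lemma Ei_lip {L : (Fin n → ℝ) → ℝ} {Q : Measure (Fin n → ℝ)} [IsProbabilityMeasure Q] {β β' : ℝ}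
    (h1 : Integrable (fun ξ => max (L ξ - β) 0) Q)
    (h2 : Integrable (fun ξ => max (L ξ - β') 0) Q) :
    |Ei L Q β - Ei L Q β'| ≤ |β - β'| := E_lip h1 h2

lemma Ei_mono {L : (Fin n → ℝ) → ℝ} {Q : Measure (Fin n → ℝ)} {β β' : ℝ} (h : β ≤ β')
    (h1 : Integrable (fun ξ => max (L ξ - β) 0) Q)
    (h2 : Integrable (fun ξ => max (L ξ - β') 0) Q) :
    Ei L Q β' ≤ Ei L Q β := by
  refine integral_mono h2 h1 fun ξ => ?_
  exact max_le_max (sub_le_sub_left h _) le_rfl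

lemma Fi_cont {ε : ℝ} (hε0 : 0 < ε) {L : (Fin n → ℝ) → ℝ} {Q : Measure (Fin n → ℝ)}
    [IsProbabilityMeasure Q]
    (hQi : ∀ β : ℝ, Integrable (fun ξ => max (L ξ - β) 0) Q) :
    Continuous (Fi ε L Q) := by
  have hlip : LipschitzWith 1 (Ei L Q) := by
    refine LipschitzWith.of_dist_le_mul fun x y => ?_
    rw [Real.dist_eq, Real.dist_eq]
    simpa using Ei_lip (hQi x) (hQi y)
  exact continuous_id.add (continuous_const.mul hlip.continuous)

lemma Fi_convex {ε : ℝ} (hε0 : 0 < ε) {L : (Fin n → ℝ) → ℝ} {Q : Measure (Fin n → ℝ)}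
    (hQi : ∀ β : ℝ, Integrable (fun ξ => max (L ξ - β) 0) Q) :
    ∀ a b s : ℝ, 0 ≤ s → s ≤ 1 →
      Fi ε L Q (s * a + (1 - s) * b) ≤ s * Fi ε L Q a + (1 - s) * Fi ε L Q b := by
  intro a b s hs0 hs1
  have h := E_convex hs0 hs1 (hQi a) (hQi b) (hQi (s * a + (1 - s) * b))
  have h2 := mul_le_mul_of_nonneg_left h (le_of_lt (show (0:ℝ) < 1 / ε by positivity))
  have h3 : s * Fi ε L Q a + (1 - s) * Fi ε L Q b
      = (s * a + (1 - s) * b) + (1 / ε) * (s * (∫ ξ, max (L ξ - a) 0 ∂Q)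
        + (1 - s) * ∫ ξ, max (L ξ - b) 0 ∂Q) := by
    unfold Fi Ei
    ring
  rw [h3]
  unfold Fi Ei
  linarith

lemma Fi_mix {ε : ℝ} {L : (Fin n → ℝ) → ℝ} {R1 R2 : Measure (Fin n → ℝ)} {t : ℝ}
    (ht0 : 0 ≤ t) (ht1 : t ≤ 1) {β : ℝ}
    (h1 : Integrable (fun ξ => max (L ξ - β) 0) R1)
    (h2 : Integrable (fun ξ => max (L ξ - β) 0) R2) :
    Fi ε L (mixT t R1 R2) β = t * Fi ε L R1 β + (1 - t) * Fi ε L R2 β := by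
  unfold Fi Ei
  rw [integral_mixT ht0 ht1 h1 h2]
  ring


theorem main {n : ℕ} {ε : ℝ} (hε0 : 0 < ε) (hε1 : ε < 1)
    {μ : Fin n → ℝ} {S : Matrix (Fin n) (Fin n) ℝ} (hS : S.PosDef)
    {L : (Fin n → ℝ) → ℝ} (hL : Continuous L)
    (hint : ∀ Q ∈ MomentSet μ S, ∀ β : ℝ, Integrable (fun ξ => max (L ξ - β) 0) Q) :
    sSup ((fun Q => ⨅ β : ℝ, Fi ε L Q β) '' MomentSet μ S)
      = ⨅ β : ℝ, (β + (1 / ε) * sSup ((fun Q => Ei L Q β) '' MomentSet μ S)) := by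
  have hεinv : (0:ℝ) < 1 / ε := by positivity
  obtain ⟨Q₀, hQ₀⟩ := momentSet_nonempty hS.posSemidef
  have hPne : (MomentSet μ S).Nonempty := ⟨Q₀, hQ₀⟩
  obtain ⟨m, hm0, hcoer⟩ := unif_coercive ⟨hε0, hε1⟩ hL μ S
  obtain ⟨c2, C, hc2, hlin⟩ : ∃ c2 C : ℝ, c2 < 0 ∧
      ∀ β : ℝ, β + (1 / ε) * ((1 + ε) / 2 * (m - β)) = c2 * β + C := by
    refine ⟨1 - (1 / ε) * ((1 + ε) / 2), (1 / ε) * ((1 + ε) / 2) * m, ?_, fun β => by ring⟩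
    have hu : ε * (1 / ε) = 1 := mul_one_div_cancel (ne_of_gt hε0)
    nlinarith [hεinv, hε0, hε1, hu]
  have hlow : ∀ Q ∈ MomentSet μ S, ∀ β ≤ m, c2 * β + C ≤ Fi ε L Q β := by
    intro Q hQ β hβ
    have h := hcoer Q hQ β hβ (hint Q hQ β)
    have h2 := mul_le_mul_of_nonneg_left h hεinv.le
    rw [← hlin β]
    unfold Fi Ei
    linarith
  have hG0 : ∀ Q ∈ MomentSet μ S, ∀ β : ℝ, min m (c2 * m + C) ≤ Fi ε L Q β := by
    intro Q hQ β
    rcases le_total β m with h | h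
    · refine le_trans (min_le_right _ _) (le_trans ?_ (hlow Q hQ β h))
      have h2 : c2 * m ≤ c2 * β := mul_le_mul_of_nonpos_left h hc2.le
      linarith
    · exact le_trans (min_le_left _ _) (le_trans h (Fi_ge hε0 β))
  by_cases hA : ∀ β : ℝ, BddAbove ((fun Q => Ei L Q β) '' MomentSet μ S)
  · -- Case B : all suprema finite
    set hh : ℝ → ℝ :=
      fun β => β + (1 / ε) * sSup ((fun Q => Ei L Q β) '' MomentSet μ S) with hhdef
    have hFle : ∀ β : ℝ, ∀ Q ∈ MomentSet μ S, Fi ε L Q β ≤ hh β := by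
      intro β Q hQ
      have h1 : Ei L Q β ≤ sSup ((fun Q => Ei L Q β) '' MomentSet μ S) :=
        le_csSup (hA β) ⟨Q, hQ, rfl⟩
      have h2 := mul_le_mul_of_nonneg_left h1 hεinv.le
      show Fi ε L Q β ≤ β + (1 / ε) * sSup ((fun Q => Ei L Q β) '' MomentSet μ S)
      unfold Fi
      linarith
    have hhlow : ∀ β, min m (c2 * m + C) ≤ hh β := fun β =>
      le_trans (hG0 Q₀ hQ₀ β) (hFle β Q₀ hQ₀)
    have hbddhh : BddBelow (Set.range hh) := ⟨_, by rintro x ⟨β, rfl⟩; exact hhlow β⟩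
    have hstar_le : ∀ β, (⨅ b, hh b) ≤ hh β := fun β => ciInf_le hbddhh β
    have hCVle : ∀ Q ∈ MomentSet μ S, (⨅ β, Fi ε L Q β) ≤ ⨅ b, hh b := by
      intro Q hQ
      refine ciInf_mono ⟨min m (c2 * m + C), ?_⟩ (fun β => hFle β Q hQ)
      rintro x ⟨β, rfl⟩
      exact hG0 Q hQ β
    have hbddCV : BddAbove ((fun Q => ⨅ β, Fi ε L Q β) '' MomentSet μ S) :=
      ⟨⨅ b, hh b, by rintro x ⟨Q, hQ, rfl⟩; exact hCVle Q hQ⟩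
    have hkey : ∀ δ : ℝ, 0 < δ →
        ∃ Q ∈ MomentSet μ S, ∀ β, (⨅ b, hh b) - δ ≤ Fi ε L Q β := by
      intro δ hδ
      by_contra hcontra
      push_neg at hcontra
      set v : ℝ := (⨅ b, hh b) - δ with hv
      clear_value v
      obtain ⟨B1, hB1m, hB1c⟩ : ∃ B1 : ℝ, B1 ≤ m ∧ B1 ≤ (v - C) / c2 :=
        ⟨min m ((v - C) / c2), min_le_left _ _, min_le_right _ _⟩
      have hBQ : ∀ Q ∈ MomentSet μ S, ∀ β : ℝ, Fi ε L Q β ≤ v → B1 ≤ β ∧ β ≤ v := by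
        intro Q hQ β hβ
        refine ⟨?_, le_trans (Fi_ge hε0 β) hβ⟩
        by_contra hb
        push_neg at hb
        have hβm : β ≤ m := le_of_lt (lt_of_lt_of_le hb hB1m)
        have h1 := hlow Q hQ β hβm
        have h2 : β < (v - C) / c2 := lt_of_lt_of_le hb hB1c
        have h3 : c2 * ((v - C) / c2) < c2 * β := mul_lt_mul_of_neg_left h2 hc2
        have h4 : c2 * ((v - C) / c2) = v - C := by
          rw [mul_div_assoc']
          exact mul_div_cancel_left₀ _ (ne_of_lt hc2)
        linarith
      have hBne : ∀ Q ∈ MomentSet μ S, {β | Fi ε L Q β ≤ v}.Nonempty := by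
        intro Q hQ
        obtain ⟨β, hβ⟩ := hcontra Q hQ
        exact ⟨β, hβ.le⟩
      have hBclosed : ∀ Q ∈ MomentSet μ S, IsClosed {β | Fi ε L Q β ≤ v} := by
        intro Q hQ
        haveI := hQ.1
        exact isClosed_le (Fi_cont hε0 (hint Q hQ)) continuous_const
      have hBbddB : ∀ Q ∈ MomentSet μ S, BddBelow {β | Fi ε L Q β ≤ v} := fun Q hQ =>
        ⟨B1, fun β hβ => (hBQ Q hQ β hβ).1⟩
      have hBbddA : ∀ Q ∈ MomentSet μ S, BddAbove {β | Fi ε L Q β ≤ v} := fun Q hQ =>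
        ⟨v, fun β hβ => (hBQ Q hQ β hβ).2⟩
      have hlmem : ∀ Q ∈ MomentSet μ S, Fi ε L Q (sInf {β | Fi ε L Q β ≤ v}) ≤ v := fun Q hQ =>
        (hBclosed Q hQ).csInf_mem (hBne Q hQ) (hBbddB Q hQ)
      have hrmem : ∀ Q ∈ MomentSet μ S, Fi ε L Q (sSup {β | Fi ε L Q β ≤ v}) ≤ v := fun Q hQ =>
        (hBclosed Q hQ).csSup_mem (hBne Q hQ) (hBbddA Q hQ)
      have hpair : ∀ Q1 ∈ MomentSet μ S, ∀ Q2 ∈ MomentSet μ S,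
          ∃ β, Fi ε L Q1 β ≤ v ∧ Fi ε L Q2 β ≤ v := by
        intro Q1 hQ1 Q2 hQ2
        by_contra hdis
        push_neg at hdis
        have key : ∀ R1, R1 ∈ MomentSet μ S → ∀ R2, R2 ∈ MomentSet μ S →
            (∀ β, Fi ε L R1 β ≤ v → v < Fi ε L R2 β) →
            sSup {β | Fi ε L R1 β ≤ v} < sInf {β | Fi ε L R2 β ≤ v} → False := by
          intro R1 hR1 R2 hR2 hsep hord
          haveI := hR1.1
          haveI := hR2.1
          obtain ⟨t, htr, htl⟩ : ∃ t, sSup {β | Fi ε L R1 β ≤ v} < t ∧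
              t < sInf {β | Fi ε L R2 β ≤ v} :=
            ⟨(sSup {β | Fi ε L R1 β ≤ v} + sInf {β | Fi ε L R2 β ≤ v}) / 2,
              by linarith, by linarith⟩
          have hR1t : v < Fi ε L R1 t := by
            by_contra h
            push_neg at h
            exact absurd (le_csSup (hBbddA R1 hR1) h) (not_le.mpr htr)
          have hR2t : v < Fi ε L R2 t := by
            by_contra h
            push_neg at h
            exact absurd (csInf_le (hBbddB R2 hR2) h) (not_le.mpr htl)
          have hGcont : Continuous fun p : ℝ × ℝ =>
              p.1 * Fi ε L R1 p.2 + (1 - p.1) * Fi ε L R2 p.2 := by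
            have h1 : Continuous (Fi ε L R1) := Fi_cont hε0 (hint R1 hR1)
            have h2 : Continuous (Fi ε L R2) := Fi_cont hε0 (hint R2 hR2)
            exact (continuous_fst.mul (h1.comp continuous_snd)).add
              ((continuous_const.sub continuous_fst).mul (h2.comp continuous_snd))
          have hGt : ∀ lam : ℝ, 0 ≤ lam → lam ≤ 1 →
              v < lam * Fi ε L R1 t + (1 - lam) * Fi ε L R2 t := by
            intro lam h0 h1
            rcases eq_or_lt_of_le h0 with he | hpos
            · rw [← he]
              simpa using hR2t
            · have ha : lam * v < lam * Fi ε L R1 t := mul_lt_mul_of_pos_left hR1t hpos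
              have hb : (1 - lam) * v ≤ (1 - lam) * Fi ε L R2 t :=
                mul_le_mul_of_nonneg_left hR2t.le (by linarith)
              nlinarith
          have hclosed : ∀ a b : ℝ, IsClosed {lam : ℝ |
              ∃ β ∈ Set.Icc a b, lam * Fi ε L R1 β + (1 - lam) * Fi ε L R2 β ≤ v} := by
            intro a b
            refine IsSeqClosed.isClosed ?_
            intro x p hx hxp
            choose βs hβs1 hβs2 using hx
            obtain ⟨βa, hβa, φ, hφ, hβtend⟩ := isCompact_Icc.tendsto_subseq hβs1
            refine ⟨βa, hβa, ?_⟩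
            have htend : Filter.Tendsto
                (fun k => (x (φ k)) * Fi ε L R1 (βs (φ k))
                  + (1 - x (φ k)) * Fi ε L R2 (βs (φ k)))
                Filter.atTop (nhds (p * Fi ε L R1 βa + (1 - p) * Fi ε L R2 βa)) := by
              have hpk : Filter.Tendsto (fun k => (x (φ k), βs (φ k))) Filter.atTop
                  (nhds (p, βa)) :=
                (hxp.comp hφ.tendsto_atTop).prodMk_nhds hβtend
              exact (hGcont.tendsto (p, βa)).comp hpk
            exact le_of_tendsto htend (Filter.Eventually.of_forall fun k => hβs2 (φ k))
          have hcover : Set.Icc (0:ℝ) 1 ⊆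
              {lam : ℝ | ∃ β ∈ Set.Icc B1 t,
                lam * Fi ε L R1 β + (1 - lam) * Fi ε L R2 β ≤ v} ∪
              {lam : ℝ | ∃ β ∈ Set.Icc t v,
                lam * Fi ε L R1 β + (1 - lam) * Fi ε L R2 β ≤ v} := by
            intro lam hlam
            obtain ⟨β, hβ⟩ := hcontra _ (mixT_mem hR1 hR2 hlam.1 hlam.2)
            have hβv : Fi ε L (mixT lam R1 R2) β ≤ v := hβ.le
            have hmix := Fi_mix (ε := ε) (β := β) hlam.1 hlam.2 (hint R1 hR1 β) (hint R2 hR2 β)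
            have hrange := hBQ _ (mixT_mem hR1 hR2 hlam.1 hlam.2) β hβv
            rcases le_or_gt β t with h | h
            · exact Or.inl ⟨β, ⟨hrange.1, h⟩, by rw [← hmix]; exact hβv⟩
            · exact Or.inr ⟨β, ⟨h.le, hrange.2⟩, by rw [← hmix]; exact hβv⟩
          have h1L : (1:ℝ) ∈ Set.Icc (0:ℝ) 1 ∩
              {lam : ℝ | ∃ β ∈ Set.Icc B1 t,
                lam * Fi ε L R1 β + (1 - lam) * Fi ε L R2 β ≤ v} := by
            refine ⟨⟨zero_le_one, le_refl 1⟩, ⟨sSup {β | Fi ε L R1 β ≤ v},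
              ⟨(hBQ R1 hR1 _ (hrmem R1 hR1)).1, htr.le⟩, ?_⟩⟩
            have hcalc : (1:ℝ) * Fi ε L R1 (sSup {β | Fi ε L R1 β ≤ v})
                + (1 - 1) * Fi ε L R2 (sSup {β | Fi ε L R1 β ≤ v})
                = Fi ε L R1 (sSup {β | Fi ε L R1 β ≤ v}) := by ring
            rw [hcalc]
            exact hrmem R1 hR1
          have h0R : (0:ℝ) ∈ Set.Icc (0:ℝ) 1 ∩
              {lam : ℝ | ∃ β ∈ Set.Icc t v,
                lam * Fi ε L R1 β + (1 - lam) * Fi ε L R2 β ≤ v} := by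
            refine ⟨⟨le_refl 0, zero_le_one⟩, ⟨sInf {β | Fi ε L R2 β ≤ v},
              ⟨htl.le, (hBQ R2 hR2 _ (hlmem R2 hR2)).2⟩, ?_⟩⟩
            have hcalc : (0:ℝ) * Fi ε L R1 (sInf {β | Fi ε L R2 β ≤ v})
                + (1 - 0) * Fi ε L R2 (sInf {β | Fi ε L R2 β ≤ v})
                = Fi ε L R2 (sInf {β | Fi ε L R2 β ≤ v}) := by ring
            rw [hcalc]
            exact hlmem R2 hR2
          obtain ⟨lam, hlam⟩ := (isPreconnected_closed_iff.mp isPreconnected_Icc) _ _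
            (hclosed B1 t) (hclosed t v) hcover ⟨1, h1L⟩ ⟨0, h0R⟩
          obtain ⟨hlamIcc, hlamL, hlamR⟩ := hlam
          obtain ⟨β1, hβ1mem, hβ1⟩ := hlamL
          obtain ⟨β2, hβ2mem, hβ2⟩ := hlamR
          have hmm := mixT_mem hR1 hR2 hlamIcc.1 hlamIcc.2
          have hmix1 := Fi_mix (ε := ε) (β := β1) hlamIcc.1 hlamIcc.2
            (hint R1 hR1 β1) (hint R2 hR2 β1)
          have hmix2 := Fi_mix (ε := ε) (β := β2) hlamIcc.1 hlamIcc.2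
            (hint R1 hR1 β2) (hint R2 hR2 β2)
          have hmixt := Fi_mix (ε := ε) (β := t) hlamIcc.1 hlamIcc.2
            (hint R1 hR1 t) (hint R2 hR2 t)
          have hc : Fi ε L (mixT lam R1 R2) t ≤ v := by
            refine convex_between (Fi_convex hε0 (hint _ hmm)) hβ1mem.2 hβ2mem.1 ?_ ?_
            · rw [hmix1]
              exact hβ1
            · rw [hmix2]
              exact hβ2
          have hgt := hGt lam hlamIcc.1 hlamIcc.2
          rw [← hmixt] at hgt
          linarith
        have horder : sSup {β | Fi ε L Q1 β ≤ v} < sInf {β | Fi ε L Q2 β ≤ v} ∨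
            sSup {β | Fi ε L Q2 β ≤ v} < sInf {β | Fi ε L Q1 β ≤ v} := by
          by_contra hor
          push_neg at hor
          obtain ⟨h12, h21⟩ := hor
          have hl1r1 : sInf {β | Fi ε L Q1 β ≤ v} ≤ sSup {β | Fi ε L Q1 β ≤ v} :=
            le_csSup (hBbddA Q1 hQ1)
              ((hBclosed Q1 hQ1).csInf_mem (hBne Q1 hQ1) (hBbddB Q1 hQ1))
          have hl2r2 : sInf {β | Fi ε L Q2 β ≤ v} ≤ sSup {β | Fi ε L Q2 β ≤ v} :=
            le_csSup (hBbddA Q2 hQ2)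
              ((hBclosed Q2 hQ2).csInf_mem (hBne Q2 hQ2) (hBbddB Q2 hQ2))
          have ht1 : Fi ε L Q1 (max (sInf {β | Fi ε L Q1 β ≤ v})
              (sInf {β | Fi ε L Q2 β ≤ v})) ≤ v :=
            convex_between (Fi_convex hε0 (hint Q1 hQ1)) (le_max_left _ _)
              (max_le hl1r1 h12) (hlmem Q1 hQ1) (hrmem Q1 hQ1)
          have ht2 : Fi ε L Q2 (max (sInf {β | Fi ε L Q1 β ≤ v})
              (sInf {β | Fi ε L Q2 β ≤ v})) ≤ v :=
            convex_between (Fi_convex hε0 (hint Q2 hQ2)) (le_max_right _ _)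
              (max_le h21 hl2r2) (hlmem Q2 hQ2) (hrmem Q2 hQ2)
          exact absurd (hdis _ ht1) (not_lt.mpr ht2)
        rcases horder with h | h
        · exact key Q1 hQ1 Q2 hQ2 hdis h
        · refine key Q2 hQ2 Q1 hQ1 ?_ h
          intro β h2
          by_contra h1
          push_neg at h1
          exact absurd (hdis β h1) (not_lt.mpr h2)
      have hbddl : BddAbove ((fun Q => sInf {β | Fi ε L Q β ≤ v}) '' MomentSet μ S) := by
        refine ⟨v, ?_⟩
        rintro x ⟨Q, hQ, rfl⟩
        exact (hBQ Q hQ _ (hlmem Q hQ)).2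
      have hβhQ : ∀ Q ∈ MomentSet μ S,
          Fi ε L Q (sSup ((fun Q => sInf {β | Fi ε L Q β ≤ v}) '' MomentSet μ S)) ≤ v := by
        intro Q hQ
        refine convex_between (Fi_convex hε0 (hint Q hQ))
          (le_csSup hbddl ⟨Q, hQ, rfl⟩) ?_ (hlmem Q hQ) (hrmem Q hQ)
        refine csSup_le (hPne.image _) ?_
        rintro x ⟨Q', hQ', rfl⟩
        obtain ⟨β, hβ1, hβ2⟩ := hpair Q' hQ' Q hQ
        exact le_trans (csInf_le (hBbddB Q' hQ') hβ1) (le_csSup (hBbddA Q hQ) hβ2)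
      set βh := sSup ((fun Q => sInf {β | Fi ε L Q β ≤ v}) '' MomentSet μ S) with hβh
      clear_value βh
      have hsup : sSup ((fun Q => Ei L Q βh) '' MomentSet μ S) ≤ ε * (v - βh) := by
        refine csSup_le (hPne.image _) ?_
        rintro x ⟨Q, hQ, rfl⟩
        have h := hβhQ Q hQ
        unfold Fi at h
        have h4 : (1 / ε) * Ei L Q βh ≤ v - βh := by linarith
        have h5 := mul_le_mul_of_nonneg_left h4 hε0.le
        have h6 : ε * ((1 / ε) * Ei L Q βh) = Ei L Q βh := by field_simp
        linarith
      have hfin : hh βh ≤ v := by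
        show βh + (1 / ε) * sSup ((fun Q => Ei L Q βh) '' MomentSet μ S) ≤ v
        have h2 := mul_le_mul_of_nonneg_left hsup hεinv.le
        have h3 : (1 / ε) * (ε * (v - βh)) = v - βh := by field_simp
        linarith
      have h5 : (⨅ b, hh b) ≤ v := le_trans (hstar_le βh) hfin
      rw [hv] at h5
      linarith
    refine le_antisymm (csSup_le (hPne.image _) ?_) ?_
    · rintro x ⟨Q, hQ, rfl⟩
      exact hCVle Q hQ
    · by_contra hcon2
      push_neg at hcon2
      set d : ℝ := (⨅ b, hh b) - sSup ((fun Q => ⨅ β, Fi ε L Q β) '' MomentSet μ S) with hd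
      have hd0 : 0 < d := by rw [hd]; linarith
      obtain ⟨Q, hQ, hQall⟩ := hkey (d / 2) (by linarith)
      have h1 : (⨅ b, hh b) - d / 2 ≤ ⨅ β, Fi ε L Q β := le_ciInf hQall
      have h2 : (⨅ β, Fi ε L Q β) ≤ sSup ((fun Q => ⨅ β, Fi ε L Q β) '' MomentSet μ S) :=
        le_csSup hbddCV ⟨Q, hQ, rfl⟩
      rw [hd] at *
      linarith
  · -- Case A : some supremum is +∞ (unbounded)
    push_neg at hA
    obtain ⟨β₀, hβ₀⟩ := hA
    have hunb : ∀ β R : ℝ, ∃ Q ∈ MomentSet μ S, R < Ei L Q β := by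
      intro β R
      obtain ⟨y, ⟨Q, hQ, rfl⟩, hy⟩ := (not_bddAbove_iff.mp hβ₀) (R + |β - β₀|)
      refine ⟨Q, hQ, ?_⟩
      haveI := hQ.1
      have hl := Ei_lip (L := L) (hint Q hQ β) (hint Q hQ β₀)
      have h2 := neg_abs_le (Ei L Q β - Ei L Q β₀)
      have h3 := abs_le.mp hl
      simp only at hy
      linarith [h3.1]
    have hsup0 : ∀ β : ℝ, sSup ((fun Q => Ei L Q β) '' MomentSet μ S) = 0 := by
      intro β
      refine Real.sSup_of_not_bddAbove ?_
      rw [not_bddAbove_iff]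
      intro R
      obtain ⟨Q, hQ, hR⟩ := hunb β R
      exact ⟨Ei L Q β, ⟨Q, hQ, rfl⟩, hR⟩
    have hRHS : (⨅ β : ℝ, (β + (1 / ε) * sSup ((fun Q => Ei L Q β) '' MomentSet μ S))) = 0 := by
      refine Real.iInf_of_not_bddBelow ?_
      rintro ⟨b, hb⟩
      have h1 := hb (Set.mem_range_self (b - 1))
      rw [hsup0 (b - 1), mul_zero, add_zero] at h1
      linarith
    have hLHS : ¬ BddAbove ((fun Q => ⨅ β, Fi ε L Q β) '' MomentSet μ S) := by
      rw [not_bddAbove_iff]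
      intro R
      obtain ⟨R', hR'R, hR'm, hR'0⟩ : ∃ R' : ℝ, R < R' ∧ m ≤ R' ∧ 0 ≤ R' :=
        ⟨max R (max m 0) + 1, by
            have := le_max_left R (max m 0); linarith,
          by
            have h1 := le_max_right R (max m 0)
            have h2 := le_max_left m 0
            linarith,
          by
            have h1 := le_max_right R (max m 0)
            have h2 := le_max_right m 0
            linarith⟩
      obtain ⟨M, hM1, hM2, hM3⟩ : ∃ M : ℝ, R' * (1 + ε) ≤ M ∧ -m + ε * (R' - m) ≤ M ∧
          ε * (R' - (R' - C) / c2) ≤ M :=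
        ⟨max (R' * (1 + ε)) (max (-m + ε * (R' - m)) (ε * (R' - (R' - C) / c2))),
          le_max_left _ _,
          le_trans (le_max_left _ _) (le_max_right _ _),
          le_trans (le_max_right _ _) (le_max_right _ _)⟩
      obtain ⟨Q, hQ, hM⟩ := hunb 0 M
      haveI := hQ.1
      refine ⟨⨅ β, Fi ε L Q β, ⟨Q, hQ, rfl⟩, lt_of_lt_of_le hR'R (le_ciInf ?_)⟩
      intro β
      rcases le_total R' β with hc1 | hc1
      · exact le_trans hc1 (Fi_ge hε0 β)
      · rcases le_total 0 β with hcb | hcb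
        · -- 0 ≤ β ≤ R'
          have hl := Ei_lip (L := L) (hint Q hQ β) (hint Q hQ 0)
          have hl1 := (abs_le.mp hl).1
          have h2 : |β - 0| ≤ R' := by rw [sub_zero, abs_of_nonneg hcb]; exact hc1
          have h3 : M - R' ≤ Ei L Q β := by
            have := abs_nonneg (β - 0)
            nlinarith [neg_abs_le (β - 0), le_abs_self (β - 0)]
          have h4 : (1 / ε) * (M - R') ≤ (1 / ε) * Ei L Q β :=
            mul_le_mul_of_nonneg_left h3 hεinv.le
          have h5 : R' ≤ (1 / ε) * (M - R') := by
            have h6 : R' * ε ≤ M - R' := by nlinarith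
            calc R' = (1 / ε) * (R' * ε) := by field_simp
              _ ≤ (1 / ε) * (M - R') := mul_le_mul_of_nonneg_left h6 hεinv.le
          unfold Fi
          linarith
        · rcases le_total m β with hc3 | hc3
          · -- m ≤ β ≤ 0
            have hl := Ei_lip (L := L) (hint Q hQ β) (hint Q hQ 0)
            have hl1 := (abs_le.mp hl).1
            have h2 : |β - 0| ≤ -m := by rw [sub_zero, abs_of_nonpos hcb]; linarith
            have h3 : M + m ≤ Ei L Q β := by linarith
            have h5 : R' - m ≤ (1 / ε) * (M + m) := by
              have h6 : (R' - m) * ε ≤ M + m := by nlinarith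
              calc R' - m = (1 / ε) * ((R' - m) * ε) := by field_simp
                _ ≤ _ := mul_le_mul_of_nonneg_left h6 hεinv.le
            have h7 := mul_le_mul_of_nonneg_left h3 hεinv.le
            unfold Fi
            linarith
          · -- β ≤ m
            have hmono : Ei L Q 0 ≤ Ei L Q β :=
              Ei_mono (by linarith) (hint Q hQ β) (hint Q hQ 0)
            have h3 : M ≤ Ei L Q β := le_trans hM.le hmono
            rcases le_total (R' - (1 / ε) * M) β with hc4 | hc4
            · have h7 := mul_le_mul_of_nonneg_left h3 hεinv.le
              unfold Fi
              linarith
            · have h8 := hlow Q hQ β hc3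
              have h9 : R' - (1 / ε) * M ≤ (R' - C) / c2 := by
                have h10 := mul_le_mul_of_nonneg_left hM3 hεinv.le
                have he : (1 / ε) * (ε * (R' - (R' - C) / c2)) = R' - (R' - C) / c2 := by
                  field_simp
                linarith
              have h10 : β ≤ (R' - C) / c2 := le_trans hc4 h9
              have h11 : R' - C ≤ c2 * β := by
                have h12 := mul_le_mul_of_nonpos_left h10 hc2.le
                have he : c2 * ((R' - C) / c2) = R' - C := by
                  rw [mul_div_assoc']
                  exact mul_div_cancel_left₀ _ (ne_of_lt hc2)
                linarith
              linarith
    rw [Real.sSup_of_not_bddAbove hLHS, hRHS]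

end WcProof

/-- Minimax interchange (stochastic saddle point) for the worst-case CVaR. -/
theorem wcCVaR_minimax {n : ℕ} (ε : ℝ) (hε : ε ∈ Set.Ioo (0 : ℝ) 1)
    (μ : Fin n → ℝ) (S : Matrix (Fin n) (Fin n) ℝ) (hS : S.PosDef)
    (L : (Fin n → ℝ) → ℝ) (hL : Continuous L)
    (hint : ∀ ℙ ∈ MomentSet μ S, ∀ β : ℝ,
      Integrable (fun ξ => max (L ξ - β) 0) ℙ) :
    sSup ((fun ℙ => ⨅ β : ℝ, (β + (1 / ε) * ∫ ξ, max (L ξ - β) 0 ∂ℙ)) ''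
        MomentSet μ S)
      = ⨅ β : ℝ, (β + (1 / ε) *
          sSup ((fun ℙ => ∫ ξ, max (L ξ - β) 0 ∂ℙ) '' MomentSet μ S)) := by
  exact WcProof.main hε.1 hε.2 hS hL hint
end

section
/- Bound on the worst-case CVaR of a linear loss (Lemma 2): suppose μ = 0 and Σ ∈ 𝕊^n is positive semidefinite. Then for every q ∈ ℝ^n, sup_{ℙ∈𝒫(0,Σ)} ℙ-CVaR_ε[qᵀξ] ≤ Σ_{i=1}^n |q_i| · sup_{ℙ∈𝒫(0,Σ)} ℙ-CVaR_ε[e_iᵀξ], i.e. the worst-case CVaR of qᵀξ is bounded above by |q|ᵀ applied to the element-wise worst-case CVaR vector of ξ. -/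
open MeasureTheory Matrix

open MeasureTheory Matrix

section aux

variable {n : ℕ} {ε : ℝ}

private lemma cvar_lb (hε0 : 0 < ε) (hε1 : ε ≤ 1) {ℙ : Measure (Fin n → ℝ)}
    [IsProbabilityMeasure ℙ] {f : (Fin n → ℝ) → ℝ} (hf : Integrable f ℙ) (β : ℝ) :
    ∫ ξ, f ξ ∂ℙ ≤ β + (1 / ε) * ∫ ξ, max (f ξ - β) 0 ∂ℙ := by
  have hmax : Integrable (fun ξ => max (f ξ - β) 0) ℙ :=
    (hf.sub (integrable_const β)).sup (integrable_const 0)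
  have h0 : 0 ≤ ∫ ξ, max (f ξ - β) 0 ∂ℙ :=
    integral_nonneg fun ξ => le_max_right _ _
  have h1 : ∫ ξ, f ξ ∂ℙ - β ≤ ∫ ξ, max (f ξ - β) 0 ∂ℙ := by
    have h' : ∫ ξ, (f ξ - β) ∂ℙ ≤ ∫ ξ, max (f ξ - β) 0 ∂ℙ :=
      integral_mono (hf.sub (integrable_const β)) hmax (fun ξ => le_max_left _ _)
    rwa [integral_sub hf (integrable_const β), integral_const, probReal_univ,
      smul_eq_mul, one_mul] at h'
  have h2 : (1:ℝ) ≤ 1 / ε := by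
    rw [le_div_iff₀ hε0]; linarith
  nlinarith

private lemma cvar_bddBelow (hε0 : 0 < ε) (hε1 : ε ≤ 1) {ℙ : Measure (Fin n → ℝ)}
    [IsProbabilityMeasure ℙ] {f : (Fin n → ℝ) → ℝ} (hf : Integrable f ℙ) :
    BddBelow (Set.range fun β : ℝ => β + (1 / ε) * ∫ ξ, max (f ξ - β) 0 ∂ℙ) :=
  ⟨∫ ξ, f ξ ∂ℙ, by rintro x ⟨β, rfl⟩; exact cvar_lb hε0 hε1 hf β⟩

private lemma integral_le_CVaR (hε0 : 0 < ε) (hε1 : ε ≤ 1) {ℙ : Measure (Fin n → ℝ)}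
    [IsProbabilityMeasure ℙ] {f : (Fin n → ℝ) → ℝ} (hf : Integrable f ℙ) :
    ∫ ξ, f ξ ∂ℙ ≤ CVaR ε ℙ f :=
  le_ciInf (cvar_lb hε0 hε1 hf)

private lemma CVaR_add_le (hε0 : 0 < ε) (hε1 : ε ≤ 1) {ℙ : Measure (Fin n → ℝ)}
    [IsProbabilityMeasure ℙ] {f g : (Fin n → ℝ) → ℝ}
    (hf : Integrable f ℙ) (hg : Integrable g ℙ) :
    CVaR ε ℙ (fun ξ => f ξ + g ξ) ≤ CVaR ε ℙ f + CVaR ε ℙ g := by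
  have hinv : (0:ℝ) ≤ 1 / ε := by positivity
  have key : ∀ β₁ β₂ : ℝ, CVaR ε ℙ (fun ξ => f ξ + g ξ) ≤
      (β₁ + (1/ε) * ∫ ξ, max (f ξ - β₁) 0 ∂ℙ) +
      (β₂ + (1/ε) * ∫ ξ, max (g ξ - β₂) 0 ∂ℙ) := by
    intro β₁ β₂
    have h1 : CVaR ε ℙ (fun ξ => f ξ + g ξ) ≤
        (β₁ + β₂) + (1/ε) * ∫ ξ, max (f ξ + g ξ - (β₁ + β₂)) 0 ∂ℙ :=
      ciInf_le (cvar_bddBelow hε0 hε1 (hf.add hg)) (β₁ + β₂)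
    have hi1 : Integrable (fun ξ => max (f ξ - β₁) 0) ℙ :=
      (hf.sub (integrable_const β₁)).sup (integrable_const 0)
    have hi2 : Integrable (fun ξ => max (g ξ - β₂) 0) ℙ :=
      (hg.sub (integrable_const β₂)).sup (integrable_const 0)
    have h2 : ∫ ξ, max (f ξ + g ξ - (β₁ + β₂)) 0 ∂ℙ ≤
        ∫ ξ, (max (f ξ - β₁) 0 + max (g ξ - β₂) 0) ∂ℙ := by
      refine integral_mono (((hf.add hg).sub (integrable_const _)).sup (integrable_const 0))
        (hi1.add hi2) (fun ξ => ?_)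
      have he : f ξ + g ξ - (β₁ + β₂) = (f ξ - β₁) + (g ξ - β₂) := by ring
      simp only [he]
      exact max_le (add_le_add (le_max_left _ _) (le_max_left _ _))
        (add_nonneg (le_max_right _ _) (le_max_right _ _))
    rw [integral_add hi1 hi2] at h2
    have h3 := mul_le_mul_of_nonneg_left h2 hinv
    linarith
  have step1 : ∀ β₁ : ℝ, CVaR ε ℙ (fun ξ => f ξ + g ξ) -
      (β₁ + (1/ε) * ∫ ξ, max (f ξ - β₁) 0 ∂ℙ) ≤ CVaR ε ℙ g :=
    fun β₁ => le_ciInf fun β₂ => by linarith [key β₁ β₂]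
  have step2 : CVaR ε ℙ (fun ξ => f ξ + g ξ) - CVaR ε ℙ g ≤ CVaR ε ℙ f :=
    le_ciInf fun β₁ => by linarith [step1 β₁]
  linarith

private lemma CVaR_zero (hε0 : 0 < ε) (hε1 : ε ≤ 1) {ℙ : Measure (Fin n → ℝ)}
    [IsProbabilityMeasure ℙ] : CVaR ε ℙ (fun _ => (0:ℝ)) = 0 := by
  have hub : CVaR ε ℙ (fun _ => (0:ℝ)) ≤ 0 := by
    refine le_trans
      (ciInf_le (cvar_bddBelow (ℙ := ℙ) (f := fun _ => (0:ℝ)) hε0 hε1 (integrable_const 0)) 0) ?_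
    simp
  have hlb : (0:ℝ) ≤ CVaR ε ℙ (fun _ => (0:ℝ)) := by
    have h := integral_le_CVaR (ℙ := ℙ) (f := fun _ => (0:ℝ)) hε0 hε1 (integrable_const 0)
    simpa using h
  linarith

private lemma CVaR_const_mul {c : ℝ} (hc : 0 < c) {ℙ : Measure (Fin n → ℝ)}
    {f : (Fin n → ℝ) → ℝ} :
    CVaR ε ℙ (fun ξ => c * f ξ) = c * CVaR ε ℙ f := by
  have key : ∀ β : ℝ, (c * β) + (1/ε) * ∫ ξ, max (c * f ξ - c * β) 0 ∂ℙ
      = c * (β + (1/ε) * ∫ ξ, max (f ξ - β) 0 ∂ℙ) := by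
    intro β
    have hpt : ∀ ξ, max (c * f ξ - c * β) 0 = c * max (f ξ - β) 0 := fun ξ => by
      rw [← mul_sub, mul_max_of_nonneg _ _ hc.le, mul_zero]
    simp_rw [hpt, integral_const_mul]; ring
  have hsurj : Function.Surjective (fun β : ℝ => c * β) :=
    fun y => ⟨y / c, by field_simp⟩
  calc CVaR ε ℙ (fun ξ => c * f ξ)
      = ⨅ β : ℝ, ((c * β) + (1/ε) * ∫ ξ, max (c * f ξ - c * β) 0 ∂ℙ) := by
        rw [CVaR, iInf, iInf]
        congr 1
        have hcomp : (fun β : ℝ => (c * β) + (1/ε) * ∫ ξ, max (c * f ξ - c * β) 0 ∂ℙ)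
            = (fun β : ℝ => β + (1/ε) * ∫ ξ, max (c * f ξ - β) 0 ∂ℙ) ∘ (fun β => c * β) := rfl
        rw [hcomp, Set.range_comp, hsurj.range_eq, Set.image_univ]
    _ = ⨅ β : ℝ, c * (β + (1/ε) * ∫ ξ, max (f ξ - β) 0 ∂ℙ) := iInf_congr key
    _ = c * CVaR ε ℙ f := (Real.mul_iInf_of_nonneg hc.le _).symm

private lemma CVaR_sum_le (hε0 : 0 < ε) (hε1 : ε ≤ 1) {ℙ : Measure (Fin n → ℝ)}
    [IsProbabilityMeasure ℙ] {f : Fin n → (Fin n → ℝ) → ℝ}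
    (hf : ∀ i, Integrable (f i) ℙ) (s : Finset (Fin n)) :
    CVaR ε ℙ (fun ξ => ∑ i ∈ s, f i ξ) ≤ ∑ i ∈ s, CVaR ε ℙ (f i) := by
  classical
  induction s using Finset.induction with
  | empty => simp [CVaR_zero hε0 hε1]
  | insert a s hx ih =>
    simp only [Finset.sum_insert hx]
    calc CVaR ε ℙ (fun ξ => f a ξ + ∑ i ∈ s, f i ξ)
        ≤ CVaR ε ℙ (f a) + CVaR ε ℙ (fun ξ => ∑ i ∈ s, f i ξ) :=
          CVaR_add_le hε0 hε1 (hf a) (integrable_finset_sum s fun i _ => hf i)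
      _ ≤ CVaR ε ℙ (f a) + ∑ i ∈ s, CVaR ε ℙ (f i) := add_le_add_right ih _

private lemma neg_measurable : Measurable (fun ξ : Fin n → ℝ => -ξ) :=
  measurable_pi_lambda _ fun i => (measurable_pi_apply i).neg

private lemma CVaR_map_neg (ℙ : Measure (Fin n → ℝ)) (i : Fin n) :
    CVaR ε (ℙ.map (fun ξ => -ξ)) (fun ξ => ξ i) = CVaR ε ℙ (fun ξ => -(ξ i)) := by
  unfold CVaR
  refine iInf_congr fun β => ?_
  congr 1
  congr 1
  rw [integral_map neg_measurable.aemeasurable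
      (show AEStronglyMeasurable (fun ξ : Fin n → ℝ => max (ξ i - β) 0)
        (Measure.map (fun ξ => -ξ) ℙ) from (((measurable_pi_apply i).sub measurable_const).max
        measurable_const).aestronglyMeasurable)]
  simp

private lemma map_neg_mem {S : Matrix (Fin n) (Fin n) ℝ} {ℙ : Measure (Fin n → ℝ)}
    (hℙ : ℙ ∈ MomentSet (0 : Fin n → ℝ) S) :
    ℙ.map (fun ξ => -ξ) ∈ MomentSet (0 : Fin n → ℝ) S := by
  obtain ⟨hprob, hint1, hint2, hmean, hcov⟩ := hℙ
  haveI := hprob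
  refine ⟨Measure.isProbabilityMeasure_map neg_measurable.aemeasurable, ?_, ?_, ?_, ?_⟩
  · intro i
    rw [integrable_map_measure (measurable_pi_apply i).aestronglyMeasurable
      neg_measurable.aemeasurable]
    have hc : ((fun ξ : Fin n → ℝ => ξ i) ∘ fun ξ => -ξ) = fun ξ => -(ξ i) := rfl
    rw [hc]; exact (hint1 i).neg
  · intro i j
    rw [integrable_map_measure
      (show AEStronglyMeasurable (fun ξ : Fin n → ℝ => ξ i * ξ j)
        (Measure.map (fun ξ => -ξ) ℙ) from
        ((measurable_pi_apply i).mul (measurable_pi_apply j)).aestronglyMeasurable)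
      neg_measurable.aemeasurable]
    have : ((fun ξ : Fin n → ℝ => ξ i * ξ j) ∘ fun ξ => -ξ)
        = fun ξ : Fin n → ℝ => ξ i * ξ j := by
      funext ξ; simp only [Function.comp_apply, Pi.neg_apply, neg_mul_neg]
    rw [this]; exact hint2 i j
  · intro i
    rw [integral_map neg_measurable.aemeasurable
      (measurable_pi_apply i).aestronglyMeasurable]
    simp only [Pi.neg_apply, Pi.zero_apply]
    rw [integral_neg]
    simpa using hmean i
  · intro i j
    rw [integral_map neg_measurable.aemeasurable
      (show AEStronglyMeasurable (fun ξ : Fin n → ℝ =>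
          (ξ i - (0 : Fin n → ℝ) i) * (ξ j - (0 : Fin n → ℝ) j))
        (Measure.map (fun ξ => -ξ) ℙ) from (((measurable_pi_apply i).sub measurable_const).mul
        ((measurable_pi_apply j).sub measurable_const)).aestronglyMeasurable)]
    have hc := hcov i j
    simp only [Pi.zero_apply, sub_zero, Pi.neg_apply] at hc ⊢
    simp only [neg_mul_neg]
    exact hc

private lemma CVaR_coord_le (hε0 : 0 < ε) (hε1 : ε ≤ 1)
    {S : Matrix (Fin n) (Fin n) ℝ} {ℙ : Measure (Fin n → ℝ)}
    (hℙ : ℙ ∈ MomentSet (0 : Fin n → ℝ) S) (i : Fin n) :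
    CVaR ε ℙ (fun ξ => ξ i) ≤ (1 / ε) * ((1 + S i i) / 2) := by
  obtain ⟨hprob, hint1, hint2, hmean, hcov⟩ := hℙ
  haveI := hprob
  have hinv : (0:ℝ) ≤ 1 / ε := by positivity
  have h1 : CVaR ε ℙ (fun ξ => ξ i) ≤ 0 + (1/ε) * ∫ ξ, max (ξ i - 0) 0 ∂ℙ :=
    ciInf_le (cvar_bddBelow hε0 hε1 (hint1 i)) 0
  have h2 : ∫ ξ, max (ξ i - 0) 0 ∂ℙ ≤ ∫ ξ, (1 + ξ i * ξ i) / 2 ∂ℙ := by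
    refine integral_mono (((hint1 i).sub (integrable_const 0)).sup (integrable_const 0))
      (((integrable_const (1:ℝ)).add (hint2 i i)).div_const 2) (fun ξ => ?_)
    have : |ξ i| ≤ (1 + ξ i * ξ i) / 2 := by nlinarith [sq_nonneg (|ξ i| - 1), sq_abs (ξ i)]
    calc max (ξ i - 0) 0 ≤ |ξ i| := by
          rw [sub_zero]; exact max_le (le_abs_self _) (abs_nonneg _)
      _ ≤ (1 + ξ i * ξ i) / 2 := this
  have h3 : ∫ ξ, (1 + ξ i * ξ i) / 2 ∂ℙ = (1 + S i i) / 2 := by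
    rw [integral_div, integral_add (integrable_const 1) (hint2 i i), integral_const,
      probReal_univ]
    have hc := hcov i i
    simp only [Pi.zero_apply, sub_zero] at hc
    rw [hc]; simp
  rw [h3] at h2
  have := mul_le_mul_of_nonneg_left h2 hinv
  linarith

private lemma coord_bddAbove (hε0 : 0 < ε) (hε1 : ε ≤ 1)
    {S : Matrix (Fin n) (Fin n) ℝ} (i : Fin n) :
    BddAbove ((fun ℙ => CVaR ε ℙ (fun ξ => ξ i)) '' MomentSet (0 : Fin n → ℝ) S) := by
  refine ⟨(1 / ε) * ((1 + S i i) / 2), ?_⟩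
  rintro x ⟨ℙ, hℙ, rfl⟩
  exact CVaR_coord_le hε0 hε1 hℙ i

private lemma wcCVaR_coord_nonneg (hε0 : 0 < ε) (hε1 : ε ≤ 1)
    {S : Matrix (Fin n) (Fin n) ℝ} (i : Fin n) :
    0 ≤ wcCVaR ε (0 : Fin n → ℝ) S (fun ξ => ξ i) := by
  rcases Set.eq_empty_or_nonempty (MomentSet (0 : Fin n → ℝ) S) with h | ⟨ℙ, hℙ⟩
  · simp [wcCVaR, h, Real.sSup_empty]
  · have hb := coord_bddAbove (ε := ε) hε0 hε1 (S := S) i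
    have h1 : CVaR ε ℙ (fun ξ => ξ i) ≤ wcCVaR ε (0 : Fin n → ℝ) S (fun ξ => ξ i) :=
      le_csSup hb ⟨ℙ, hℙ, rfl⟩
    obtain ⟨hprob, hint1, _, hmean, _⟩ := hℙ
    haveI := hprob
    have h0 : (0:ℝ) ≤ CVaR ε ℙ (fun ξ => ξ i) := by
      have := integral_le_CVaR hε0 hε1 (hint1 i)
      rw [hmean i] at this
      simpa using this
    linarith

end aux

/-- Bound on the worst-case CVaR of a linear loss (Lemma 2). -/
theorem wcCVaR_linear_bound {n : ℕ} (ε : ℝ) (hε : ε ∈ Set.Ioo (0 : ℝ) 1)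
    (S : Matrix (Fin n) (Fin n) ℝ) (hS : S.PosSemidef) (q : Fin n → ℝ) :
    wcCVaR ε (0 : Fin n → ℝ) S (fun ξ => q ⬝ᵥ ξ)
      ≤ ∑ i : Fin n, |q i| * wcCVaR ε (0 : Fin n → ℝ) S (fun ξ => ξ i) := by
  obtain ⟨hε0, hε1⟩ := hε
  have hε1' : ε ≤ 1 := hε1.le
  have hRHS : 0 ≤ ∑ i : Fin n, |q i| * wcCVaR ε (0 : Fin n → ℝ) S (fun ξ => ξ i) :=
    Finset.sum_nonneg fun i _ =>
      mul_nonneg (abs_nonneg _) (wcCVaR_coord_nonneg hε0 hε1' i)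
  refine Real.sSup_le ?_ hRHS
  rintro x ⟨ℙ, hℙ, rfl⟩
  obtain ⟨hprob, hint1, hint2, hmean, hcov⟩ := id hℙ
  haveI := hprob
  have hdot : (fun ξ : Fin n → ℝ => q ⬝ᵥ ξ) = fun ξ => ∑ i : Fin n, q i * ξ i := by
    funext ξ; simp [dotProduct]
  have hsum : CVaR ε ℙ (fun ξ => q ⬝ᵥ ξ) ≤ ∑ i : Fin n, CVaR ε ℙ (fun ξ => q i * ξ i) := by
    rw [hdot]
    exact CVaR_sum_le hε0 hε1' (fun i => (hint1 i).const_mul (q i)) Finset.univ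
  refine hsum.trans (Finset.sum_le_sum fun i _ => ?_)
  rcases lt_trichotomy (q i) 0 with hq | hq | hq
  · -- negative coefficient : use the pushforward by negation
    have habs : 0 < |q i| := abs_pos.mpr hq.ne
    have heq : (fun ξ : Fin n → ℝ => q i * ξ i) = fun ξ => |q i| * (-(ξ i)) := by
      funext ξ
      rw [abs_of_neg hq]; ring
    rw [heq, CVaR_const_mul habs]
    have hmapmem := map_neg_mem hℙ
    have hle : CVaR ε (ℙ.map (fun ξ => -ξ)) (fun ξ => ξ i)
        ≤ wcCVaR ε (0 : Fin n → ℝ) S (fun ξ => ξ i) :=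
      le_csSup (coord_bddAbove hε0 hε1' i) ⟨_, hmapmem, rfl⟩
    rw [CVaR_map_neg] at hle
    exact mul_le_mul_of_nonneg_left hle habs.le
  · -- zero coefficient
    have heq : (fun ξ : Fin n → ℝ => q i * ξ i) = fun _ => (0:ℝ) := by
      funext ξ; rw [hq]; ring
    rw [heq, CVaR_zero hε0 hε1', hq]
    simp [mul_nonneg (abs_nonneg (0:ℝ)) (wcCVaR_coord_nonneg hε0 hε1' i)]
  · -- positive coefficient
    rw [CVaR_const_mul hq, abs_of_pos hq]
    refine mul_le_mul_of_nonneg_left ?_ hq.le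
    exact le_csSup (coord_bddAbove hε0 hε1' i) ⟨ℙ, hℙ, rfl⟩
end
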